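/- arXiv:1602.04126 — 2 statements merged into one kernel-verified Lean document; each statement's English description precedes it below -/
import Mathlib

section
/- Every eaco (C,P) is a restricted Σ(C_P^o)-doctrine: for every co-comprehension arrow ⌈α⌉ and every arrow f : X → A, the restricted Beck–Chevalley condition f*Σ_{⌈α⌉}⌈α⌉*β = Σ_{⌈f*α⌉} q* ⌈α⌉*β holds, where q is the induced arrow on the pullback of ⌈α⌉ along f. -/
open CategoryTheory CategoryTheory.Limits

universe w v u

/-- A doctrine: a contravariant functor from a category with finite products
to partially ordered sets, presented via a family of fibers `P` and monotone
reindexing maps. -/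
structure Doctrine (C : Type u) [Category.{v} C] (P : C → Type w)
    [∀ A, PartialOrder (P A)] where
  map : ∀ {X A : C}, (X ⟶ A) → P A → P X
  map_mono : ∀ {X A : C} (f : X ⟶ A) ⦃α β : P A⦄, α ≤ β → map f α ≤ map f β
  map_id : ∀ {A : C} (α : P A), map (𝟙 A) α = α
  map_comp : ∀ {X Y A : C} (f : X ⟶ Y) (g : Y ⟶ A) (α : P A),
    map (f ≫ g) α = map f (map g α)

variable {C : Type u} [Category.{v} C] {P : C → Type w}

/-- The opposite doctrine `P^o`, with fibers the opposite posets. -/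
def Doctrine.op [∀ A, PartialOrder (P A)] (D : Doctrine C P) :
    Doctrine C (fun A => (P A)ᵒᵈ) where
  map f α := OrderDual.toDual (D.map f (OrderDual.ofDual α))
  map_mono f _ _ h := D.map_mono f h
  map_id := D.map_id
  map_comp := D.map_comp

/-- Comprehension structure on a doctrine with fiberwise top elements. -/
structure Comprehension [∀ A, PartialOrder (P A)] [∀ A, OrderTop (P A)]
    (D : Doctrine C P) where
  cObj : ∀ {A : C}, P A → C
  cArr : ∀ {A : C} (α : P A), cObj α ⟶ A
  map_cArr : ∀ {A : C} (α : P A), D.map (cArr α) α = ⊤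
  univ : ∀ {A Y : C} (α : P A) (f : Y ⟶ A), D.map f α = ⊤ →
    ∃! k : Y ⟶ cObj α, k ≫ cArr α = f

/-- Fullness of comprehension: the functor `α ↦ ⌊α⌋` into subobjects is full. -/
def Comprehension.IsFull [∀ A, PartialOrder (P A)] [∀ A, OrderTop (P A)]
    {D : Doctrine C P} (cmp : Comprehension D) : Prop :=
  ∀ (A : C) (α β : P A) (g : cmp.cObj α ⟶ cmp.cObj β),
    g ≫ cmp.cArr β = cmp.cArr α → α ≤ β

/-- Co-comprehension structure on a doctrine with fiberwise bottom elements. -/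
structure CoComprehension [∀ A, PartialOrder (P A)] [∀ A, OrderBot (P A)]
    (D : Doctrine C P) where
  oObj : ∀ {A : C}, P A → C
  oArr : ∀ {A : C} (α : P A), oObj α ⟶ A
  map_oArr : ∀ {A : C} (α : P A), D.map (oArr α) α = ⊥
  univ : ∀ {A Y : C} (α : P A) (f : Y ⟶ A), D.map f α = ⊥ →
    ∃! k : Y ⟶ oObj α, k ≫ oArr α = f

/-- Fullness of co-comprehension: the contravariant functor `α ↦ ⌈α⌉` into
subobjects is full. -/
def CoComprehension.IsFull [∀ A, PartialOrder (P A)] [∀ A, OrderBot (P A)]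
    {D : Doctrine C P} (co : CoComprehension D) : Prop :=
  ∀ (A : C) (α β : P A) (g : co.oObj β ⟶ co.oObj α),
    g ≫ co.oArr α = co.oArr β → α ≤ β

/-- A stable initial object: an initial object `Z` with `X × Z ≅ Z` for all `X`. -/
def StableInitial [HasFiniteProducts C] (Z : C) : Prop :=
  Nonempty (IsInitial Z) ∧ ∀ X : C, Nonempty ((X ⨯ Z) ≅ Z)

/-- The axiom of choice for a doctrine: along every projection `π_Γ : Γ × A → Γ`
with `A` not a stable initial object, reindexing has a left adjoint, and every
`ψ ∈ P(Γ × A)` has a choice arrow `ε_ψ : Γ ⟶ A` with `Σ_{π_Γ}ψ = ⟨id, ε_ψ⟩*ψ`. -/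
structure AxChoice [HasFiniteProducts C] [∀ A, PartialOrder (P A)]
    (D : Doctrine C P) where
  Sig : ∀ (Γ A : C), ¬ StableInitial A → P (Γ ⨯ A) → P Γ
  adj : ∀ {Γ A : C} (h : ¬ StableInitial A) (ψ : P (Γ ⨯ A)) (β : P Γ),
    Sig Γ A h ψ ≤ β ↔ ψ ≤ D.map prod.fst β
  eps : ∀ {Γ A : C}, ¬ StableInitial A → P (Γ ⨯ A) → (Γ ⟶ A)
  eps_spec : ∀ {Γ A : C} (h : ¬ StableInitial A) (ψ : P (Γ ⨯ A)),
    Sig Γ A h ψ = D.map (prod.lift (𝟙 Γ) (eps h ψ)) ψ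

/-- Elementary structure: equality predicates `δ_A` such that
`ψ ↦ π₁*ψ ⊓ π₂₃*δ_A` is left adjoint to reindexing along `id_X × Δ_A`. -/
structure Elementary [HasFiniteProducts C] [∀ A, SemilatticeInf (P A)]
    (D : Doctrine C P) where
  eq : ∀ A : C, P (A ⨯ A)
  eq_adj : ∀ (X A : C) (ψ : P (X ⨯ A)) (φ : P ((X ⨯ A) ⨯ A)),
    (D.map prod.fst ψ ⊓ D.map (prod.map prod.snd (𝟙 A)) (eq A)) ≤ φ ↔
      ψ ≤ D.map (prod.lift (𝟙 (X ⨯ A)) prod.snd) φ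

/-- An eaco: an elementary doctrine with full co-comprehension satisfying AC,
together with the compatibility of choice arrows for graphs of co-comprehension
arrows with reindexing. -/
structure Eaco [HasFiniteProducts C] [∀ A, SemilatticeInf (P A)]
    [∀ A, OrderBot (P A)] (D : Doctrine C P) where
  elem : Elementary D
  cocmp : CoComprehension D
  full : cocmp.IsFull
  ac : AxChoice D
  compat : ∀ {X A : C} (f : X ⟶ A) (α : P A)
      (h1 : ¬ StableInitial (cocmp.oObj α))
      (h2 : ¬ StableInitial (cocmp.oObj (D.map f α))),
      D.map f (D.map (prod.lift (𝟙 A)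
          (ac.eps h1 (D.map (prod.map (𝟙 A) (cocmp.oArr α)) (elem.eq A))))
        (D.map (prod.map (𝟙 A) (cocmp.oArr α)) (elem.eq A)))
      = D.map (prod.lift (𝟙 X)
          (ac.eps h2 (D.map (prod.map (𝟙 X) (cocmp.oArr (D.map f α))) (elem.eq X))))
        (D.map (prod.map (𝟙 X) (cocmp.oArr (D.map f α))) (elem.eq X))

/-- Weak power objects: the doctrine is higher order. -/
structure HigherOrder [HasFiniteProducts C] [∀ A, PartialOrder (P A)]
    (D : Doctrine C P) where
  pow : C → C
  mem : ∀ A : C, P (A ⨯ pow A)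
  classify : ∀ (A Y : C) (φ : P (A ⨯ Y)),
    ∃ χ : Y ⟶ pow A, D.map (prod.map (𝟙 A) χ) (mem A) = φ

/-- A heaco: a higher order eaco. -/
structure Heaco [HasFiniteProducts C] [∀ A, SemilatticeInf (P A)]
    [∀ A, OrderBot (P A)] (D : Doctrine C P) where
  eaco : Eaco D
  ho : HigherOrder D

/-- Implicational structure relative to right adjoints `Pi` along projections. -/
structure Implicational [HasFiniteProducts C] [∀ A, PartialOrder (P A)]
    (D : Doctrine C P) (Pi : ∀ (Γ A : C), P (Γ ⨯ A) → P Γ) where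
  imp : ∀ {A : C}, P A → P A → P A
  map_imp : ∀ {X A : C} (f : X ⟶ A) (α β : P A),
    D.map f (imp α β) = imp (D.map f α) (D.map f β)
  pi_imp : ∀ {Γ A : C} (α : P Γ) (β : P (Γ ⨯ A)),
    Pi Γ A (imp (D.map prod.fst α) β) = imp α (Pi Γ A β)
  ax_a : ∀ {A : C} (φ ψ : P A), φ ≤ imp ψ φ
  ax_b : ∀ {A : C} (γ φ ψ : P A), imp γ (imp φ ψ) ≤ imp (imp γ φ) (imp γ ψ)
  ax_c : ∀ {A : C} (γ φ ψ : P A), γ ≤ imp φ ψ → γ ≤ φ → γ ≤ ψ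
  ax_d : ∀ {A : C} (γ φ ψ : P A), φ ≤ ψ → γ ≤ imp φ ψ

/-- A tripos: a Heyting-algebra valued doctrine with `Σ` and `Π` along
projections satisfying Beck–Chevalley, equality predicates, and weak power
objects. -/
structure Tripos [HasFiniteProducts C] [∀ A, PartialOrder (P A)]
    (D : Doctrine C P) where
  inf : ∀ {A : C}, P A → P A → P A
  sup : ∀ {A : C}, P A → P A → P A
  himp : ∀ {A : C}, P A → P A → P A
  top : ∀ A : C, P A
  bot : ∀ A : C, P A
  inf_le_left : ∀ {A : C} (α β : P A), inf α β ≤ α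
  inf_le_right : ∀ {A : C} (α β : P A), inf α β ≤ β
  le_inf : ∀ {A : C} (γ α β : P A), γ ≤ α → γ ≤ β → γ ≤ inf α β
  le_sup_left : ∀ {A : C} (α β : P A), α ≤ sup α β
  le_sup_right : ∀ {A : C} (α β : P A), β ≤ sup α β
  sup_le : ∀ {A : C} (α β γ : P A), α ≤ γ → β ≤ γ → sup α β ≤ γ
  le_top : ∀ {A : C} (α : P A), α ≤ top A
  bot_le : ∀ {A : C} (α : P A), bot A ≤ α
  himp_adj : ∀ {A : C} (γ α β : P A), γ ≤ himp α β ↔ inf γ α ≤ β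
  map_inf : ∀ {X A : C} (f : X ⟶ A) (α β : P A),
    D.map f (inf α β) = inf (D.map f α) (D.map f β)
  map_sup : ∀ {X A : C} (f : X ⟶ A) (α β : P A),
    D.map f (sup α β) = sup (D.map f α) (D.map f β)
  map_himp : ∀ {X A : C} (f : X ⟶ A) (α β : P A),
    D.map f (himp α β) = himp (D.map f α) (D.map f β)
  map_top : ∀ {X A : C} (f : X ⟶ A), D.map f (top A) = top X
  map_bot : ∀ {X A : C} (f : X ⟶ A), D.map f (bot A) = bot X
  Sig : ∀ (Γ A : C), P (Γ ⨯ A) → P Γ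
  Sig_adj : ∀ {Γ A : C} (ψ : P (Γ ⨯ A)) (β : P Γ),
    Sig Γ A ψ ≤ β ↔ ψ ≤ D.map prod.fst β
  Sig_bc : ∀ {Γ Δ A : C} (f : Δ ⟶ Γ) (ψ : P (Γ ⨯ A)),
    D.map f (Sig Γ A ψ) = Sig Δ A (D.map (prod.map f (𝟙 A)) ψ)
  Pi : ∀ (Γ A : C), P (Γ ⨯ A) → P Γ
  Pi_adj : ∀ {Γ A : C} (ψ : P (Γ ⨯ A)) (β : P Γ),
    β ≤ Pi Γ A ψ ↔ D.map prod.fst β ≤ ψ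
  Pi_bc : ∀ {Γ Δ A : C} (f : Δ ⟶ Γ) (ψ : P (Γ ⨯ A)),
    D.map f (Pi Γ A ψ) = Pi Δ A (D.map (prod.map f (𝟙 A)) ψ)
  eq : ∀ X : C, P (X ⨯ X)
  eq_spec : ∀ {X : C} (α : P (X ⨯ X)),
    top X ≤ D.map (prod.lift (𝟙 X) (𝟙 X)) α ↔ eq X ≤ α
  pow : C → C
  mem : ∀ A : C, P (A ⨯ pow A)
  classify : ∀ (A Y : C) (φ : P (A ⨯ Y)),
    ∃ χ : Y ⟶ pow A, D.map (prod.map (𝟙 A) χ) (mem A) = φ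

/-!
Along a co-comprehension arrow `g = ⌈α⌉` whose domain is not a stable initial object, the left
adjoint is `Σ_g γ = Σ_π (G(g) ∧ π₂*γ)`, computed with the quantifier given by AC; over a stable
initial domain the fibre is trivial and `Σ_g` is `⊥`. Substitutivity of equality and Frobenius
reciprocity give `Σ_g g*β = I(g) ∧ β` with `I(g) = Σ_π G(g)` the image of `g`, and the eaco
compatibility condition says precisely that `f* I(⌈α⌉) = I(⌈f*α⌉)`. Since
`q*⌈α⌉*β = ⌈f*α⌉*f*β`, both sides of Beck–Chevalley become `I(⌈f*α⌉) ∧ f*β`.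
The degenerate cases need `f*⊥ = ⊥`, which is the same computation for `α = β = ⊥`,
because `I(⌈α⌉) ∧ α = Σ_{⌈α⌉} ⌈α⌉*α = Σ_{⌈α⌉} ⊥ = ⊥`.
-/

theorem StableInitial.of_hom [HasFiniteProducts C] {W Z : C} (q : W ⟶ Z)
    (hZ : StableInitial Z) : StableInitial W := by
  obtain ⟨⟨hI⟩, hP⟩ := hZ
  have hWZ : IsInitial (W ⨯ Z) := hI.ofIso (hP W).some.symm
  let eWZ : W ≅ W ⨯ Z :=
    { hom := prod.lift (𝟙 W) q
      inv := prod.fst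
      hom_inv_id := prod.lift_fst _ _
      inv_hom_id := hWZ.hom_ext _ _ }
  let eW : W ≅ Z := eWZ ≪≫ (hP W).some
  exact ⟨⟨hI.ofIso eW.symm⟩, fun X => ⟨prod.mapIso (Iso.refl X) eW ≪≫ (hP X).some ≪≫ eW.symm⟩⟩

attribute [local simp] prod.lift_fst prod.lift_snd

class Doctrine.PreservesInf [∀ A, SemilatticeInf (P A)] (D : Doctrine C P) : Prop where
  map_inf : ∀ {X A : C} (f : X ⟶ A) (α β : P A), D.map f (α ⊓ β) = D.map f α ⊓ D.map f β

theorem Doctrine.map_inf [∀ A, SemilatticeInf (P A)] (D : Doctrine C P) [D.PreservesInf]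
    {X A : C} (f : X ⟶ A) (α β : P A) : D.map f (α ⊓ β) = D.map f α ⊓ D.map f β :=
  Doctrine.PreservesInf.map_inf f α β

namespace Elementary

variable [HasFiniteProducts C] [∀ A, SemilatticeInf (P A)] {D : Doctrine C P} (el : Elementary D)

noncomputable def graph {B Z : C} (g : Z ⟶ B) : P (B ⨯ Z) :=
  D.map (prod.map (𝟙 B) g) (el.eq B)

theorem le_map_lift_eq {Y A : C} (t : Y ⟶ A) (χ : P Y) :
    χ ≤ D.map (prod.lift t t) (el.eq A) := by
  let ψ : P (Y ⨯ A) := D.map prod.fst χ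
  calc χ = D.map (prod.lift (𝟙 Y) t) ψ := by rw [← D.map_comp, prod.lift_fst, D.map_id]
    _ ≤ D.map (prod.lift (𝟙 Y) t) (D.map (prod.lift (𝟙 _) prod.snd)
          (D.map prod.fst ψ ⊓ D.map (prod.map prod.snd (𝟙 A)) (el.eq A))) :=
        D.map_mono _ ((el.eq_adj Y A ψ _).mp le_rfl)
    _ ≤ D.map (prod.lift (𝟙 Y) t) (D.map (prod.lift (𝟙 _) prod.snd)
          (D.map (prod.map prod.snd (𝟙 A)) (el.eq A))) :=
        D.map_mono _ (D.map_mono _ inf_le_right)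
    _ = D.map (prod.lift t t) (el.eq A) := by
        simp only [← D.map_comp]; congr 1; ext <;> simp

theorem le_map_lift_graph {B Z : C} (g : Z ⟶ B) (χ : P Z) :
    χ ≤ D.map (prod.lift g (𝟙 Z)) (el.graph g) := by
  rw [graph, ← D.map_comp, prod.lift_map, Category.id_comp, Category.comp_id]
  exact el.le_map_lift_eq g χ

variable [D.PreservesInf]

/-- `Θ(a, a) ∧ a = a' ⊢ Θ(a, a')` -/
theorem map_diag_inf_eq_le {A : C} (Θ : P (A ⨯ A)) :
    D.map (prod.lift prod.fst prod.fst) Θ ⊓ el.eq A ≤ Θ := by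
  have h := (el.eq_adj A A Θ (D.map (prod.map prod.fst (𝟙 A)) Θ)).mpr (by
    rw [← D.map_comp, prod.lift_map, Category.id_comp, Category.comp_id, prod.lift_fst_snd,
      D.map_id])
  have h' := D.map_mono (prod.lift (prod.lift prod.fst prod.fst) prod.snd) h
  simp only [D.map_inf, ← D.map_comp] at h'
  convert h' using 3 <;> simp [D.map_id]

theorem map_fst_inf_eq_le_map_snd {A : C} (χ : P A) :
    D.map prod.fst χ ⊓ el.eq A ≤ D.map prod.snd χ := by
  simpa only [← D.map_comp, prod.lift_snd] using el.map_diag_inf_eq_le (D.map prod.snd χ)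

theorem eq_le_map_swap {A : C} :
    el.eq A ≤ D.map (prod.lift prod.snd prod.fst) (el.eq A) := by
  have h := el.map_diag_inf_eq_le (D.map (prod.lift prod.snd prod.fst) (el.eq A))
  rw [← D.map_comp, prod.comp_lift, prod.lift_snd, prod.lift_fst] at h
  exact le_trans (le_inf (el.le_map_lift_eq prod.fst _) le_rfl) h

theorem eq_inf_map_snd_le_map_fst {A : C} (χ : P A) :
    el.eq A ⊓ D.map prod.snd χ ≤ D.map prod.fst χ := by
  have h := D.map_mono (prod.lift prod.snd prod.fst) (el.map_fst_inf_eq_le_map_snd χ)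
  rw [D.map_inf, ← D.map_comp, ← D.map_comp, prod.lift_fst, prod.lift_snd, inf_comm] at h
  exact le_trans (inf_le_inf_right _ el.eq_le_map_swap) h

theorem eq_inf_map_snd {A : C} (χ : P A) :
    el.eq A ⊓ D.map prod.snd χ = el.eq A ⊓ D.map prod.fst χ :=
  le_antisymm (le_inf inf_le_left (el.eq_inf_map_snd_le_map_fst χ))
    (le_inf inf_le_left (by rw [inf_comm]; exact el.map_fst_inf_eq_le_map_snd χ))

theorem graph_inf_map_snd_map {B Z : C} (g : Z ⟶ B) (χ : P B) :
    el.graph g ⊓ D.map prod.snd (D.map g χ) = el.graph g ⊓ D.map prod.fst χ := by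
  have h := congrArg (D.map (prod.map (𝟙 B) g)) (el.eq_inf_map_snd χ)
  simpa only [graph, D.map_inf, ← D.map_comp, prod.map_snd, prod.map_fst, Category.comp_id] using h

end Elementary

namespace AxChoice

variable [HasFiniteProducts C]

theorem nonempty_hom [∀ A, PartialOrder (P A)] [∀ A, OrderBot (P A)] {D : Doctrine C P}
    (ac : AxChoice D) (Γ : C) {Z : C} (h : ¬ StableInitial Z) : Nonempty (Γ ⟶ Z) :=
  ⟨ac.eps h (⊥ : P (Γ ⨯ Z))⟩

variable [∀ A, SemilatticeInf (P A)] {D : Doctrine C P} (ac : AxChoice D)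

theorem map_lift_le_Sig {Γ Z : C} (h : ¬ StableInitial Z) (k : Γ ⟶ Z) (ψ : P (Γ ⨯ Z)) :
    D.map (prod.lift (𝟙 Γ) k) ψ ≤ ac.Sig Γ Z h ψ := by
  have h' := D.map_mono (prod.lift (𝟙 Γ) k) ((ac.adj h ψ _).mp le_rfl)
  rwa [← D.map_comp, prod.lift_fst, D.map_id] at h'

theorem Sig_inf_map_fst [D.PreservesInf] {Γ Z : C} (h : ¬ StableInitial Z) (ψ : P (Γ ⨯ Z))
    (β : P Γ) : ac.Sig Γ Z h (ψ ⊓ D.map prod.fst β) = ac.Sig Γ Z h ψ ⊓ β := by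
  refine le_antisymm (le_inf ?_ ((ac.adj h _ _).mpr inf_le_right)) ?_
  · exact (ac.adj h _ _).mpr (inf_le_left.trans ((ac.adj h ψ _).mp le_rfl))
  · -- the choice arrow realises `Σ` as a reindexing, which commutes with `⊓`
    calc ac.Sig Γ Z h ψ ⊓ β
        = D.map (prod.lift (𝟙 Γ) (ac.eps h ψ)) (ψ ⊓ D.map prod.fst β) := by
          rw [ac.eps_spec, D.map_inf, ← D.map_comp, prod.lift_fst, D.map_id]
      _ ≤ _ := ac.map_lift_le_Sig h _ _

variable (el : Elementary D)

noncomputable def sigma {B Z : C} (h : ¬ StableInitial Z) (g : Z ⟶ B) (γ : P Z) : P B :=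
  ac.Sig B Z h (el.graph g ⊓ D.map prod.snd γ)

noncomputable def image {B Z : C} (h : ¬ StableInitial Z) (g : Z ⟶ B) : P B :=
  ac.Sig B Z h (el.graph g)

theorem sigma_le_iff [D.PreservesInf] {B Z : C} (h : ¬ StableInitial Z) (g : Z ⟶ B)
    (γ : P Z) (β : P B) : ac.sigma el h g γ ≤ β ↔ γ ≤ D.map g β := by
  rw [sigma, ac.adj]
  constructor
  · intro hγ
    have h' := D.map_mono (prod.lift g (𝟙 Z)) hγ
    rw [D.map_inf, ← D.map_comp, ← D.map_comp, prod.lift_snd, D.map_id, prod.lift_fst] at h'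
    exact (le_inf (el.le_map_lift_graph g γ) le_rfl).trans h'
  · intro hγ
    calc el.graph g ⊓ D.map prod.snd γ ≤ el.graph g ⊓ D.map prod.snd (D.map g β) :=
          inf_le_inf_left _ (D.map_mono _ hγ)
      _ = el.graph g ⊓ D.map prod.fst β := el.graph_inf_map_snd_map g β
      _ ≤ D.map prod.fst β := inf_le_right

theorem sigma_map [D.PreservesInf] {B Z : C} (h : ¬ StableInitial Z) (g : Z ⟶ B) (β : P B) :
    ac.sigma el h g (D.map g β) = ac.image el h g ⊓ β := by
  rw [sigma, el.graph_inf_map_snd_map, ac.Sig_inf_map_fst, image]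

include ac in
theorem map_lift_bot [∀ A, OrderBot (P A)] {Γ Z : C} (h : ¬ StableInitial Z) (k : Γ ⟶ Z) :
    D.map (prod.lift (𝟙 Γ) k) ⊥ = ⊥ :=
  le_bot_iff.mp ((ac.map_lift_le_Sig h k ⊥).trans ((ac.adj h ⊥ ⊥).mpr bot_le))

end AxChoice

namespace Eaco

variable [HasFiniteProducts C] [∀ A, SemilatticeInf (P A)] [∀ A, OrderBot (P A)]
  {D : Doctrine C P} (E : Eaco D)

include E in
theorem le_of_isInitial {Z : C} (hZ : IsInitial Z) (γ γ' : P Z) : γ ≤ γ' := by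
  refine E.full Z γ γ' (E.cocmp.oArr γ' ≫ hZ.to (E.cocmp.oObj γ)) ?_
  rw [Category.assoc, hZ.hom_ext (hZ.to _ ≫ E.cocmp.oArr γ) (𝟙 Z), Category.comp_id]

theorem le_of_isInitial_oObj {Y : C} {γ : P Y} (hγ : IsInitial (E.cocmp.oObj γ)) (χ : P Y) :
    χ ≤ γ :=
  E.full Y χ γ (hγ.to _) (hγ.hom_ext _ _)

theorem stableInitial_of_stableInitial_oObj_bot {Y : C}
    (h : StableInitial (E.cocmp.oObj (⊥ : P Y))) : StableInitial Y := by
  obtain ⟨k, -, -⟩ := E.cocmp.univ (⊥ : P Y) (𝟙 Y) (D.map_id _)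
  exact h.of_hom k

theorem stableInitial_oObj_of_map_eq {Y B : C} (t : Y ⟶ B) {α : P B} {β : P Y}
    (hβ : D.map t α = β) (hα : StableInitial (E.cocmp.oObj α)) :
    StableInitial (E.cocmp.oObj β) := by
  subst hβ
  obtain ⟨q, -, -⟩ := E.cocmp.univ α (E.cocmp.oArr (D.map t α) ≫ t)
    (by rw [D.map_comp, E.cocmp.map_oArr])
  exact hα.of_hom q

open Classical in
noncomputable def sigmaOArr {A : C} (α : P A) (γ : P (E.cocmp.oObj α)) : P A :=
  if h : StableInitial (E.cocmp.oObj α) then ⊥ else E.ac.sigma E.elem h (E.cocmp.oArr α) γ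

theorem map_image_oArr {X A : C} (f : X ⟶ A) {α : P A}
    (hA : ¬ StableInitial (E.cocmp.oObj α)) (hX : ¬ StableInitial (E.cocmp.oObj (D.map f α))) :
    D.map f (E.ac.image E.elem hA (E.cocmp.oArr α))
      = E.ac.image E.elem hX (E.cocmp.oArr (D.map f α)) := by
  rw [AxChoice.image, AxChoice.image, E.ac.eps_spec, E.ac.eps_spec]
  exact E.compat f α hA hX

variable [D.PreservesInf]

theorem image_oArr_inf_self {A : C} {α : P A} (hA : ¬ StableInitial (E.cocmp.oObj α)) :
    E.ac.image E.elem hA (E.cocmp.oArr α) ⊓ α = ⊥ := by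
  rw [← AxChoice.sigma_map, E.cocmp.map_oArr]
  exact le_bot_iff.mp ((E.ac.sigma_le_iff E.elem hA _ _ _).mpr bot_le)

theorem map_bot_of_not_stableInitial {X A : C} (f : X ⟶ A)
    (hA : ¬ StableInitial (E.cocmp.oObj (⊥ : P A)))
    (hX : ¬ StableInitial (E.cocmp.oObj (D.map f (⊥ : P A)))) :
    D.map f (⊥ : P A) = ⊥ :=
  calc D.map f (⊥ : P A) = D.map f (E.ac.image E.elem hA (E.cocmp.oArr ⊥) ⊓ ⊥) := by
        rw [inf_bot_eq]
    _ = E.ac.image E.elem hX (E.cocmp.oArr (D.map f ⊥)) ⊓ D.map f ⊥ := by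
        rw [D.map_inf, E.map_image_oArr f hA hX]
    _ = ⊥ := E.image_oArr_inf_self hX

include E in
theorem map_bot {Y B : C} (u : Y ⟶ B) : D.map u (⊥ : P B) = ⊥ := by
  by_cases hY : StableInitial Y
  · exact le_antisymm (E.le_of_isInitial hY.1.some _ _) bot_le
  have hB : ¬ StableInitial (E.cocmp.oObj (⊥ : P B)) :=
    fun h => hY ((E.stableInitial_of_stableInitial_oObj_bot h).of_hom u)
  -- `u` factors through `π₂ : Y × B ⟶ B`, which has a section since AC gives an arrow `B ⟶ Y`
  obtain ⟨e⟩ := E.ac.nonempty_hom B hY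
  have hYB : ¬ StableInitial (E.cocmp.oObj (D.map (prod.snd : Y ⨯ B ⟶ B) ⊥)) := fun h =>
    hB (E.stableInitial_oObj_of_map_eq (prod.lift e (𝟙 B))
      (by rw [← D.map_comp, prod.lift_snd, D.map_id]) h)
  calc D.map u ⊥ = D.map (prod.lift (𝟙 Y) u) (D.map (prod.snd : Y ⨯ B ⟶ B) ⊥) := by
        rw [← D.map_comp, prod.lift_snd]
    _ = ⊥ := by
        rw [E.map_bot_of_not_stableInitial _ hB hYB,
          E.ac.map_lift_bot (fun h => hY (h.of_hom u)) u]

theorem sigmaOArr_le_iff {A : C} (α : P A) (γ : P (E.cocmp.oObj α)) (β : P A) :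
    E.sigmaOArr α γ ≤ β ↔ γ ≤ D.map (E.cocmp.oArr α) β := by
  unfold sigmaOArr
  split_ifs with h
  · exact ⟨fun _ => E.le_of_isInitial h.1.some _ _, fun _ => bot_le⟩
  · exact E.ac.sigma_le_iff E.elem h _ γ β

theorem map_sigmaOArr_map {X A : C} (f : X ⟶ A) (α : P A)
    (q : E.cocmp.oObj (D.map f α) ⟶ E.cocmp.oObj α)
    (hq : q ≫ E.cocmp.oArr α = E.cocmp.oArr (D.map f α) ≫ f) (β : P A) :
    D.map f (E.sigmaOArr α (D.map (E.cocmp.oArr α) β))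
      = E.sigmaOArr (D.map f α) (D.map q (D.map (E.cocmp.oArr α) β)) := by
  unfold sigmaOArr
  by_cases hA : StableInitial (E.cocmp.oObj α)
  · rw [dif_pos hA, dif_pos (hA.of_hom q), E.map_bot]
  rw [dif_neg hA, E.ac.sigma_map]
  by_cases hX : StableInitial (E.cocmp.oObj (D.map f α))
  · -- everything in the fibre over `X` lies below `f*α`, and `I(⌈α⌉) ∧ α = ⊥`
    rw [dif_pos hX]
    refine le_bot_iff.mp ((le_inf (D.map_mono f inf_le_left)
      (E.le_of_isInitial_oObj hX.1.some _)).trans ?_)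
    rw [← D.map_inf, E.image_oArr_inf_self, E.map_bot]
  · have hqβ : D.map q (D.map (E.cocmp.oArr α) β)
        = D.map (E.cocmp.oArr (D.map f α)) (D.map f β) := by
      rw [← D.map_comp, hq, D.map_comp]
    rw [dif_neg hX, hqβ, E.ac.sigma_map, D.map_inf, E.map_image_oArr f hA hX]

end Eaco

/-- Every eaco is a restricted `Σ(C_P^o)`-doctrine: there are
left adjoints along co-comprehension arrows satisfying the restricted
Beck–Chevalley condition `f*Σ_{⌈α⌉}⌈α⌉*β = Σ_{⌈f*α⌉} q* ⌈α⌉*β`, where `q` is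
the induced arrow on the pullback of `⌈α⌉` along `f`. -/
theorem statement15 {C : Type u} [Category.{v} C] [HasFiniteProducts C]
    {P : C → Type w} [∀ A, SemilatticeInf (P A)] [∀ A, OrderBot (P A)]
    (D : Doctrine C P)
    (map_inf : ∀ {X A : C} (f : X ⟶ A) (α β : P A),
      D.map f (α ⊓ β) = D.map f α ⊓ D.map f β)
    (E : Eaco D) :
    ∃ SigCo : ∀ (A : C) (α : P A), P (E.cocmp.oObj α) → P A,
      (∀ (A : C) (α : P A) (γ : P (E.cocmp.oObj α)) (β : P A),
        SigCo A α γ ≤ β ↔ γ ≤ D.map (E.cocmp.oArr α) β) ∧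
      (∀ (X A : C) (f : X ⟶ A) (α : P A)
        (q : E.cocmp.oObj (D.map f α) ⟶ E.cocmp.oObj α),
        q ≫ E.cocmp.oArr α = E.cocmp.oArr (D.map f α) ≫ f →
        ∀ β : P A,
          D.map f (SigCo A α (D.map (E.cocmp.oArr α) β))
            = SigCo X (D.map f α) (D.map q (D.map (E.cocmp.oArr α) β))) := by
  have : D.PreservesInf := ⟨map_inf⟩
  exact ⟨fun _ => E.sigmaOArr, fun _ => E.sigmaOArr_le_iff,
    fun _ _ f α q hq β => E.map_sigmaOArr_map f α q hq β⟩
end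

section
/- A heaco (C,P) is a tripos if and only if it is implicational. -/
/-!
Forward direction: the Heyting implication of a tripos satisfies the Hilbert axioms, and
`Π (π* α ⇨ β) = α ⇨ Π β` holds by comparing both sides through the adjunctions.

Backward direction: the weak power object `Ω` of the terminal object carries a generic
predicate `gen`, so quantifying over `Ω` is second-order quantification over propositions,
and all connectives get their Russell–Prawitz definitions from `→` and `Π`:
`⊤ = ∀s. s → s`, `⊥ = ∀s. s`, `φ ∧ ψ = ∀s. (φ → ψ → s) → s`,
`φ ∨ ψ = ∀s. (φ → s) → (ψ → s) → s`, `∃a. ψ = ∀s. (∀a. ψ → s) → s`, and equality is Leibniz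
equality `x = y := ∀U. x ∈ U → y ∈ U`. Each elimination rule is obtained by instantiating `s`
at a classifying map of the target predicate, the introduction rules are Hilbert-calculus
derivations, and stability under reindexing is Beck–Chevalley for `Π`.
-/

open CategoryTheory CategoryTheory.Limits

universe w v u

variable {C : Type u} [Category.{v} C] {P : C → Type w}

namespace Doctrine

variable [∀ A, PartialOrder (P A)] (D : Doctrine C P)

@[simp]
lemma map_map {X Y A : C} (f : X ⟶ Y) (g : Y ⟶ A) (α : P A) :
    D.map f (D.map g α) = D.map (f ≫ g) α :=
  (D.map_comp f g α).symm

attribute [simp] map_id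

end Doctrine

structure PiStructure [HasFiniteProducts C] [∀ A, PartialOrder (P A)]
    (D : Doctrine C P) where
  Pi : ∀ Γ A : C, P (Γ ⨯ A) → P Γ
  le_Pi_iff : ∀ {Γ A : C} (ψ : P (Γ ⨯ A)) (β : P Γ), β ≤ Pi Γ A ψ ↔ D.map prod.fst β ≤ ψ
  map_Pi : ∀ {Γ Δ A : C} (f : Δ ⟶ Γ) (ψ : P (Γ ⨯ A)),
    D.map f (Pi Γ A ψ) = Pi Δ A (D.map (prod.map f (𝟙 A)) ψ)

section

variable [HasFiniteProducts C] [∀ A, PartialOrder (P A)] {D : Doctrine C P}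

namespace Tripos

variable (T : Tripos D)

lemma himp_mp {A : C} {γ φ ψ : P A} (h₁ : γ ≤ T.himp φ ψ) (h₂ : γ ≤ φ) : γ ≤ ψ :=
  (T.le_inf γ γ φ le_rfl h₂).trans ((T.himp_adj γ φ ψ).1 h₁)

lemma Pi_himp_map_fst {Γ A : C} (α : P Γ) (β : P (Γ ⨯ A)) :
    T.Pi Γ A (T.himp (D.map prod.fst α) β) = T.himp α (T.Pi Γ A β) :=
  eq_of_forall_le_iff fun γ => by
    rw [T.Pi_adj, T.himp_adj, T.himp_adj, T.Pi_adj, T.map_inf]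

lemma himp_himp_le {A : C} (γ φ ψ : P A) :
    T.himp γ (T.himp φ ψ) ≤ T.himp (T.himp γ φ) (T.himp γ ψ) := by
  rw [T.himp_adj, T.himp_adj]
  set Z := T.inf (T.inf (T.himp γ (T.himp φ ψ)) (T.himp γ φ)) γ
  have hγ : Z ≤ γ := T.inf_le_right _ _
  have hφψ : Z ≤ T.himp γ (T.himp φ ψ) := (T.inf_le_left _ _).trans (T.inf_le_left _ _)
  have hφ : Z ≤ T.himp γ φ := (T.inf_le_left _ _).trans (T.inf_le_right _ _)
  exact T.himp_mp (T.himp_mp hφψ hγ) (T.himp_mp hφ hγ)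

def implicational : Implicational D T.Pi where
  imp := T.himp
  map_imp := T.map_himp
  pi_imp := T.Pi_himp_map_fst
  ax_a _ _ := (T.himp_adj _ _ _).2 (T.inf_le_left _ _)
  ax_b := T.himp_himp_le
  ax_c _ _ _ := T.himp_mp
  ax_d γ φ _ h := (T.himp_adj _ _ _).2 ((T.inf_le_right γ φ).trans h)

end Tripos

attribute [local simp] PiStructure.map_Pi Implicational.map_imp
  prod.lift_fst prod.lift_snd prod.lift_fst_assoc prod.lift_snd_assoc

namespace HigherOrder

variable (HO : HigherOrder D)

lemma exists_map_lift_mem_eq {A Y : C} (φ : P (A ⨯ Y)) :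
    ∃ χ : Y ⟶ HO.pow A, ∀ {Z : C} (f : Z ⟶ A) (g : Z ⟶ Y),
      D.map (prod.lift f (g ≫ χ)) (HO.mem A) = D.map (prod.lift f g) φ := by
  obtain ⟨χ, hχ⟩ := HO.classify A Y φ
  refine ⟨χ, fun f g => ?_⟩
  rw [← hχ, D.map_map, prod.lift_map, Category.comp_id]

noncomputable def gen : P (HO.pow (⊤_ C)) :=
  D.map (prod.lift (terminal.from _) (𝟙 _)) (HO.mem (⊤_ C))

lemma exists_map_gen_eq {Y : C} (φ : P Y) :
    ∃ χ : Y ⟶ HO.pow (⊤_ C), D.map χ HO.gen = φ := by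
  obtain ⟨χ, hχ⟩ := HO.exists_map_lift_mem_eq (D.map (prod.snd : (⊤_ C) ⨯ Y ⟶ Y) φ)
  refine ⟨χ, ?_⟩
  simpa [gen] using hχ (terminal.from Y) (𝟙 Y)

end HigherOrder

namespace PiStructure

variable (U : PiStructure D) (HO : HigherOrder D)

lemma Pi_le_of_map_lift_eq {Γ A : C} {θ : P (Γ ⨯ A)} (t : Γ ⟶ A) {β : P Γ}
    (h : D.map (prod.lift (𝟙 Γ) t) θ = β) : U.Pi Γ A θ ≤ β := by
  rw [← h]
  simpa using D.map_mono (prod.lift (𝟙 Γ) t) ((U.le_Pi_iff θ _).1 le_rfl)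

noncomputable def bot (A : C) : P A :=
  U.Pi A (HO.pow (⊤_ C)) (D.map prod.snd HO.gen)

lemma bot_le {A : C} (α : P A) : U.bot HO A ≤ α := by
  obtain ⟨χ, hχ⟩ := HO.exists_map_gen_eq α
  exact U.Pi_le_of_map_lift_eq χ (by simp [hχ])

lemma map_bot {X A : C} (f : X ⟶ A) : D.map f (U.bot HO A) = U.bot HO X := by
  simp [bot]

end PiStructure

namespace Implicational

section Hilbert

variable {Pi : ∀ Γ A : C, P (Γ ⨯ A) → P Γ} (I : Implicational D Pi) {A : C}

lemma le_imp_self (γ φ : P A) : γ ≤ I.imp φ φ :=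
  I.ax_d γ φ φ le_rfl

lemma le_imp_of_le {γ φ : P A} (ψ : P A) (h : γ ≤ φ) : γ ≤ I.imp ψ φ :=
  h.trans (I.ax_a φ ψ)

lemma le_imp_mp {γ χ φ ψ : P A} (h₁ : γ ≤ I.imp χ (I.imp φ ψ)) (h₂ : γ ≤ I.imp χ φ) :
    γ ≤ I.imp χ ψ :=
  I.ax_c _ _ _ (h₁.trans (I.ax_b χ φ ψ)) h₂

lemma le_imp_of_le_imp {γ φ ψ ψ' : P A} (hψ : ψ ≤ ψ') (h : γ ≤ I.imp φ ψ) :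
    γ ≤ I.imp φ ψ' :=
  I.le_imp_mp (I.ax_d _ _ _ (I.ax_d _ _ _ hψ)) h

lemma le_imp_comm {γ φ ψ θ : P A} (h : γ ≤ I.imp φ (I.imp ψ θ)) :
    γ ≤ I.imp ψ (I.imp φ θ) :=
  I.le_imp_mp (I.le_imp_of_le_imp (I.ax_b φ ψ θ) (I.le_imp_of_le ψ h))
    (I.ax_d _ _ _ (I.ax_a ψ φ))

lemma le_imp_imp_self {γ φ : P A} (ψ : P A) (h : γ ≤ φ) : γ ≤ I.imp (I.imp φ ψ) ψ :=
  I.le_imp_mp (I.le_imp_self γ _) (I.le_imp_of_le _ h)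

end Hilbert

section SecondOrder

variable {U : PiStructure D} (I : Implicational D U.Pi) (HO : HigherOrder D)

local notation "Ω" => HO.pow (⊤_ C)

noncomputable def top (A : C) : P A :=
  U.Pi A Ω (I.imp (D.map prod.snd HO.gen) (D.map prod.snd HO.gen))

noncomputable def inf {A : C} (φ ψ : P A) : P A :=
  U.Pi A Ω (I.imp (I.imp (D.map prod.fst φ) (I.imp (D.map prod.fst ψ) (D.map prod.snd HO.gen)))
    (D.map prod.snd HO.gen))

noncomputable def sup {A : C} (φ ψ : P A) : P A :=
  U.Pi A Ω (I.imp (I.imp (D.map prod.fst φ) (D.map prod.snd HO.gen))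
    (I.imp (I.imp (D.map prod.fst ψ) (D.map prod.snd HO.gen)) (D.map prod.snd HO.gen)))

noncomputable def sigma (Γ A : C) (ψ : P (Γ ⨯ A)) : P Γ :=
  U.Pi Γ Ω (I.imp
    (U.Pi (Γ ⨯ Ω) A (I.imp (D.map (prod.map prod.fst (𝟙 A)) ψ)
      (D.map (prod.fst ≫ prod.snd) HO.gen)))
    (D.map prod.snd HO.gen))

noncomputable def leibniz (X : C) : P (X ⨯ X) :=
  U.Pi (X ⨯ X) (HO.pow X)
    (I.imp (D.map (prod.map prod.fst (𝟙 _)) (HO.mem X)) (D.map (prod.map prod.snd (𝟙 _)) (HO.mem X)))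

lemma map_top {X A : C} (f : X ⟶ A) : D.map f (I.top HO A) = I.top HO X := by
  simp [top]

lemma map_inf {X A : C} (f : X ⟶ A) (φ ψ : P A) :
    D.map f (I.inf HO φ ψ) = I.inf HO (D.map f φ) (D.map f ψ) := by
  simp [inf]

lemma map_sup {X A : C} (f : X ⟶ A) (φ ψ : P A) :
    D.map f (I.sup HO φ ψ) = I.sup HO (D.map f φ) (D.map f ψ) := by
  simp [sup]

lemma map_sigma {Γ Δ A : C} (f : Δ ⟶ Γ) (ψ : P (Γ ⨯ A)) :
    D.map f (I.sigma HO Γ A ψ) = I.sigma HO Δ A (D.map (prod.map f (𝟙 A)) ψ) := by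
  simp [sigma]

lemma le_top {A : C} (α : P A) : α ≤ I.top HO A :=
  (U.le_Pi_iff _ _).2 (I.le_imp_self _ _)

lemma inf_le_left {A : C} (φ ψ : P A) : I.inf HO φ ψ ≤ φ := by
  obtain ⟨χ, hχ⟩ := HO.exists_map_gen_eq φ
  have h : I.inf HO φ ψ ≤ I.imp (I.imp φ (I.imp ψ φ)) φ :=
    U.Pi_le_of_map_lift_eq χ (by simp [hχ])
  exact I.ax_c _ _ _ h (I.ax_d _ _ _ (I.ax_a φ ψ))

lemma inf_le_right {A : C} (φ ψ : P A) : I.inf HO φ ψ ≤ ψ := by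
  obtain ⟨χ, hχ⟩ := HO.exists_map_gen_eq ψ
  have h : I.inf HO φ ψ ≤ I.imp (I.imp φ (I.imp ψ ψ)) ψ :=
    U.Pi_le_of_map_lift_eq χ (by simp [hχ])
  exact I.ax_c _ _ _ h (I.ax_d _ _ _ (I.le_imp_self _ _))

lemma le_inf {A : C} {γ φ ψ : P A} (hφ : γ ≤ φ) (hψ : γ ≤ ψ) : γ ≤ I.inf HO φ ψ :=
  (U.le_Pi_iff _ _).2 <| I.le_imp_mp (I.le_imp_imp_self _ (D.map_mono _ hφ))
    (I.le_imp_of_le _ (D.map_mono _ hψ))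

lemma le_imp_iff {A : C} (γ φ ψ : P A) : γ ≤ I.imp φ ψ ↔ I.inf HO γ φ ≤ ψ := by
  constructor
  · intro h
    obtain ⟨χ, hχ⟩ := HO.exists_map_gen_eq ψ
    have h' : I.inf HO γ φ ≤ I.imp (I.imp γ (I.imp φ ψ)) ψ :=
      U.Pi_le_of_map_lift_eq χ (by simp [hχ])
    exact I.ax_c _ _ _ h' (I.ax_d _ _ _ h)
  · intro h
    refine I.le_imp_of_le_imp h ?_
    rw [inf, ← I.pi_imp, U.le_Pi_iff]
    exact I.le_imp_comm (I.le_imp_imp_self _ le_rfl)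

lemma le_sup_left {A : C} (φ ψ : P A) : φ ≤ I.sup HO φ ψ :=
  (U.le_Pi_iff _ _).2 <| I.le_imp_of_le_imp (I.ax_a _ _) (I.le_imp_imp_self _ le_rfl)

lemma le_sup_right {A : C} (φ ψ : P A) : ψ ≤ I.sup HO φ ψ :=
  (U.le_Pi_iff _ _).2 <| I.le_imp_of_le _ (I.le_imp_imp_self _ le_rfl)

lemma sup_le {A : C} {φ ψ γ : P A} (hφ : φ ≤ γ) (hψ : ψ ≤ γ) : I.sup HO φ ψ ≤ γ := by
  obtain ⟨χ, hχ⟩ := HO.exists_map_gen_eq γ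
  have h : I.sup HO φ ψ ≤ I.imp (I.imp φ γ) (I.imp (I.imp ψ γ) γ) :=
    U.Pi_le_of_map_lift_eq χ (by simp [hχ])
  exact I.ax_c _ _ _ (I.ax_c _ _ _ h (I.ax_d _ _ _ hφ)) (I.ax_d _ _ _ hψ)

lemma sigma_le {Γ A : C} {ψ : P (Γ ⨯ A)} {β : P Γ} (h : ψ ≤ D.map prod.fst β) :
    I.sigma HO Γ A ψ ≤ β := by
  obtain ⟨χ, hχ⟩ := HO.exists_map_gen_eq β
  have h' : I.sigma HO Γ A ψ ≤ I.imp (U.Pi Γ A (I.imp ψ (D.map prod.fst β))) β :=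
    U.Pi_le_of_map_lift_eq χ (by rw [← hχ]; simp)
  exact I.ax_c _ _ _ h' ((U.le_Pi_iff _ _).2 (I.ax_d _ _ _ h))

lemma le_map_fst_sigma {Γ A : C} (ψ : P (Γ ⨯ A)) : ψ ≤ D.map prod.fst (I.sigma HO Γ A ψ) := by
  rw [sigma, U.map_Pi, I.map_imp, U.le_Pi_iff]
  refine I.le_imp_mp (I.ax_d _ _ _ ?_) (I.ax_a _ _)
  have e : prod.lift (prod.fst ≫ prod.fst) (prod.fst ≫ prod.snd) =
      (prod.fst : (Γ ⨯ A) ⨯ Ω ⟶ Γ ⨯ A) := by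
    ext <;> simp
  rw [U.map_Pi]
  exact U.Pi_le_of_map_lift_eq (prod.fst ≫ prod.snd) (by simp [e])

lemma top_le_map_diag_leibniz (X : C) :
    I.top HO X ≤ D.map (prod.lift (𝟙 X) (𝟙 X)) (I.leibniz HO X) := by
  have h : D.map (prod.lift (𝟙 X) (𝟙 X)) (I.leibniz HO X) =
      U.Pi X (HO.pow X) (I.imp (HO.mem X) (HO.mem X)) := by
    simp [leibniz]
  rw [h]
  exact (U.le_Pi_iff _ _).2 (I.le_imp_self _ _)

lemma leibniz_le {X : C} {α : P (X ⨯ X)} (h : I.top HO X ≤ D.map (prod.lift (𝟙 X) (𝟙 X)) α) :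
    I.leibniz HO X ≤ α := by
  -- the quantified predicate is instantiated at `{z | α (x₁, z)}`
  obtain ⟨χ, hχ⟩ := HO.exists_map_lift_mem_eq (D.map (prod.lift prod.snd prod.fst) α)
  have hsubst : I.leibniz HO X ≤ I.imp (D.map (prod.lift prod.fst prod.fst) α) α :=
    U.Pi_le_of_map_lift_eq (prod.fst ≫ χ) (by simp [hχ])
  have hrefl : I.leibniz HO X ≤ D.map (prod.lift prod.fst prod.fst) α :=
    calc I.leibniz HO X ≤ I.top HO (X ⨯ X) := I.le_top HO _
      _ = D.map prod.fst (I.top HO X) := (I.map_top HO _).symm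
      _ ≤ D.map prod.fst (D.map (prod.lift (𝟙 X) (𝟙 X)) α) := D.map_mono _ h
      _ = D.map (prod.lift prod.fst prod.fst) α := by simp
  exact I.ax_c _ _ _ hsubst hrefl

noncomputable def toTripos : Tripos D where
  inf := I.inf HO
  sup := I.sup HO
  himp := I.imp
  top := I.top HO
  bot := U.bot HO
  inf_le_left := I.inf_le_left HO
  inf_le_right := I.inf_le_right HO
  le_inf _ _ _ := I.le_inf HO
  le_sup_left := I.le_sup_left HO
  le_sup_right := I.le_sup_right HO
  sup_le _ _ _ := I.sup_le HO
  le_top := I.le_top HO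
  bot_le := U.bot_le HO
  himp_adj := I.le_imp_iff HO
  map_inf := I.map_inf HO
  map_sup := I.map_sup HO
  map_himp := I.map_imp
  map_top := I.map_top HO
  map_bot := U.map_bot HO
  Sig := I.sigma HO
  Sig_adj _ _ := ⟨fun h => (I.le_map_fst_sigma HO _).trans (D.map_mono _ h), I.sigma_le HO⟩
  Sig_bc := I.map_sigma HO
  Pi := U.Pi
  Pi_adj := U.le_Pi_iff
  Pi_bc := U.map_Pi
  eq := I.leibniz HO
  eq_spec _ := ⟨I.leibniz_le HO, fun h => (I.top_le_map_diag_leibniz HO _).trans (D.map_mono _ h)⟩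
  pow := HO.pow
  mem := HO.mem
  classify := HO.classify

end SecondOrder

end Implicational

end

theorem statement19_general {C : Type u} [Category.{v} C] [HasFiniteProducts C]
    {P : C → Type w} [∀ A, SemilatticeInf (P A)] [∀ A, OrderBot (P A)]
    (D : Doctrine C P)
    (H : Heaco D) :
    Nonempty (Tripos D) ↔
      ∃ Pi : ∀ (Γ A : C), P (Γ ⨯ A) → P Γ,
        (∀ (Γ A : C) (ψ : P (Γ ⨯ A)) (β : P Γ),
          β ≤ Pi Γ A ψ ↔ D.map prod.fst β ≤ ψ) ∧
        (∀ (Γ Δ A : C) (f : Δ ⟶ Γ) (ψ : P (Γ ⨯ A)),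
          D.map f (Pi Γ A ψ) = Pi Δ A (D.map (prod.map f (𝟙 A)) ψ)) ∧
        Nonempty (Implicational D Pi) := by
  constructor
  · rintro ⟨T⟩
    exact ⟨T.Pi, fun _ _ => T.Pi_adj, fun _ _ _ => T.Pi_bc, ⟨T.implicational⟩⟩
  · rintro ⟨Pi, hadj, hbc, ⟨I⟩⟩
    let U : PiStructure D := ⟨Pi, hadj _ _, hbc _ _ _⟩
    exact ⟨Implicational.toTripos (U := U) I H.ho⟩

/-- A heaco `(C,P)` is a tripos if and only if it is
implicational (with respect to right adjoints along projections satisfying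
Beck–Chevalley). -/
theorem statement19 {C : Type u} [Category.{v} C] [HasFiniteProducts C]
    {P : C → Type w} [∀ A, SemilatticeInf (P A)] [∀ A, OrderBot (P A)]
    (D : Doctrine C P)
    (map_inf : ∀ {X A : C} (f : X ⟶ A) (α β : P A),
      D.map f (α ⊓ β) = D.map f α ⊓ D.map f β)
    (H : Heaco D) :
    Nonempty (Tripos D) ↔
      ∃ Pi : ∀ (Γ A : C), P (Γ ⨯ A) → P Γ,
        (∀ (Γ A : C) (ψ : P (Γ ⨯ A)) (β : P Γ),
          β ≤ Pi Γ A ψ ↔ D.map prod.fst β ≤ ψ) ∧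
        (∀ (Γ Δ A : C) (f : Δ ⟶ Γ) (ψ : P (Γ ⨯ A)),
          D.map f (Pi Γ A ψ) = Pi Δ A (D.map (prod.map f (𝟙 A)) ψ)) ∧
        Nonempty (Implicational D Pi) :=
  statement19_general D H
end
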